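/- arXiv:2511.05959 — 3 statements merged into one kernel-verified Lean document; each statement's English description precedes it below -/
import Mathlib

section
/- If p and p′ are nonzero real numbers with p ≠ p′, then the r-matrices r_iv(p) = r(1,0,p,p) and r_iv(p′) = r(1,0,p′,p′) are not equivalent; in particular, the parameter p appearing in the representative r_iv cannot be removed or changed by automorphisms of (C⁵₀+A). -/
noncomputable section

/-- The underlying supervector space `V = ℝ⁴`, with basis `T 0, T 1` even and `T 2, T 3` odd
(corresponding to `T₁, T₂; T₃, T₄`). -/
abbrev V4 : Type := Fin 4 → ℝ

/-- The basis vectors `T₁, T₂, T₃, T₄` (zero-indexed). -/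
def T (i : Fin 4) : V4 := Pi.single i 1

/-- The bilinear bracket of the Lie superalgebra `(C⁵₀+A)`, determined by
`[T₁,T₃] = −T₄`, `[T₃,T₁] = T₄`, `[T₁,T₄] = T₃`, `[T₄,T₁] = −T₃`,
`[T₃,T₃] = T₂`, `[T₄,T₄] = T₂`, all other brackets of basis vectors zero. -/
def brC5 (x y : V4) : V4 :=
  ![0, x 2 * y 2 + x 3 * y 3, x 0 * y 3 - x 3 * y 0, -(x 0 * y 2) + x 2 * y 0]

/-- The even subspace `span{T₁,T₂}`. -/
def spanEven : Submodule ℝ V4 := Submodule.span ℝ {T 0, T 1}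

/-- The odd subspace `span{T₃,T₄}`. -/
def spanOdd : Submodule ℝ V4 := Submodule.span ℝ {T 2, T 3}

/-- The general even super skew-symmetric r-matrix
`r(m₁,m₂,m₃,m₄) = m₁(T₁⊗T₂ − T₂⊗T₁) + m₂(T₃⊗T₄ + T₄⊗T₃) + m₃ T₃⊗T₃ + m₄ T₄⊗T₄ ∈ V⊗V`,
recorded by its coefficient matrix `r^{ab}`. -/
def rmat (m₁ m₂ m₃ m₄ : ℝ) : Matrix (Fin 4) (Fin 4) ℝ :=
  !![0, m₁, 0, 0; -m₁, 0, 0, 0; 0, 0, m₃, m₂; 0, 0, m₂, m₄]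

/-- An automorphism of `(C⁵₀+A)`: a linear bijection preserving the parity subspaces and
the bracket. -/
def IsAuto (A : V4 →ₗ[ℝ] V4) : Prop :=
  Function.Bijective A ∧
  (∀ x ∈ spanEven, A x ∈ spanEven) ∧
  (∀ x ∈ spanOdd, A x ∈ spanOdd) ∧
  (∀ x y : V4, A (brC5 x y) = brC5 (A x) (A y))

/-- `(A⊗A)` applied to an r-matrix in coefficient form:
`((A⊗A)r)^{cd} = Σ_{a,b} r^{ab} (A T_a)^c (A T_b)^d`. -/
def applyAA (A : V4 →ₗ[ℝ] V4) (r : Matrix (Fin 4) (Fin 4) ℝ) : Matrix (Fin 4) (Fin 4) ℝ :=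
  Matrix.of fun c d => ∑ a : Fin 4, ∑ b : Fin 4, r a b * A (T a) c * A (T b) d

/-- Equivalence of r-matrices: `r ~ r′` iff `(A⊗A)(r′) = r` for some automorphism `A`. -/
def REquiv (r r' : Matrix (Fin 4) (Fin 4) ℝ) : Prop :=
  ∃ A : V4 →ₗ[ℝ] V4, IsAuto A ∧ applyAA A r' = r

lemma even_comp {x : V4} (hx : x ∈ spanEven) : x 2 = 0 ∧ x 3 = 0 := by
  induction hx using Submodule.span_induction with
  | mem y hy => rcases hy with rfl | rfl <;> constructor <;> simp [T, Pi.single_apply]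
  | zero => simp
  | add y z _ _ hy hz => simp [hy.1, hy.2, hz.1, hz.2]
  | smul c y _ hy => simp [Pi.smul_apply, hy.1, hy.2]

lemma odd_comp {x : V4} (hx : x ∈ spanOdd) : x 0 = 0 ∧ x 1 = 0 := by
  induction hx using Submodule.span_induction with
  | mem y hy => rcases hy with rfl | rfl <;> constructor <;> simp [T, Pi.single_apply]
  | zero => simp
  | add y z _ _ hy hz => simp [hy.1, hy.2, hz.1, hz.2]
  | smul c y _ hy => simp [Pi.smul_apply, hy.1, hy.2]

/-- If `p` and `p′` are nonzero reals with `p ≠ p′`, then `r_iv(p) = r(1,0,p,p)` and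
`r_iv(p′) = r(1,0,p′,p′)` are not equivalent: the parameter `p` in the representative `r_iv`
cannot be removed or changed by automorphisms of `(C⁵₀+A)`. -/
theorem rmatrix_riv_parameter_not_removable (p p' : ℝ) (hp : p ≠ 0) (hp' : p' ≠ 0)
    (hne : p ≠ p') :
    ¬ REquiv (rmat 1 0 p p) (rmat 1 0 p' p') := by
  rintro ⟨A, ⟨hbij, heven, hodd, hbr⟩, heq⟩
  -- names for the matrix entries of A
  set a := A (T 0) 0 with ha_def
  set d := A (T 1) 1 with hd_def
  set e := A (T 2) 2 with he_def
  set f := A (T 2) 3 with hf_def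
  set g := A (T 3) 2 with hg_def
  set h := A (T 3) 3 with hh_def
  clear_value a d e f g h
  have hT0e : A (T 0) ∈ spanEven := heven _ (Submodule.subset_span (by simp))
  have hT1e : A (T 1) ∈ spanEven := heven _ (Submodule.subset_span (by simp))
  have hT2o : A (T 2) ∈ spanOdd := hodd _ (Submodule.subset_span (by simp))
  have hT3o : A (T 3) ∈ spanOdd := hodd _ (Submodule.subset_span (by simp))
  obtain ⟨z02, z03⟩ := even_comp hT0e
  obtain ⟨z12, z13⟩ := even_comp hT1e
  obtain ⟨z20, z21⟩ := odd_comp hT2o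
  obtain ⟨z30, z31⟩ := odd_comp hT3o
  -- bracket relations
  have hb22 : brC5 (T 2) (T 2) = T 1 := by
    funext i; fin_cases i <;> simp [brC5, T, Pi.single_apply]
  have hb33 : brC5 (T 3) (T 3) = T 1 := by
    funext i; fin_cases i <;> simp [brC5, T, Pi.single_apply]
  have hb02 : brC5 (T 0) (T 2) = -(T 3) := by
    funext i; fin_cases i <;> simp [brC5, T, Pi.single_apply]
  have E1 : d = e * e + f * f := by
    have := congrFun (hbr (T 2) (T 2)) 1
    rw [hb22] at this
    simpa [brC5, ← hd_def, ← he_def, ← hf_def] using this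
  have E2 : d = g * g + h * h := by
    have := congrFun (hbr (T 3) (T 3)) 1
    rw [hb33] at this
    simpa [brC5, ← hd_def, ← hg_def, ← hh_def] using this
  have E10 : A (T 1) 0 = 0 := by
    have := congrFun (hbr (T 2) (T 2)) 0
    rw [hb22] at this
    simpa [brC5] using this
  have E3 : -g = a * f := by
    have := congrFun (hbr (T 0) (T 2)) 2
    rw [hb02, map_neg] at this
    simpa [brC5, z20, ← ha_def, ← hf_def, ← hg_def] using this
  have E4 : -h = -(a * e) := by
    have := congrFun (hbr (T 0) (T 2)) 3
    rw [hb02, map_neg] at this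
    simpa [brC5, z20, ← ha_def, ← he_def, ← hh_def] using this
  -- entries of the transformed r-matrix
  have H01 : a * d = 1 := by
    have := congrFun (congrFun heq 0) 1
    simp [applyAA, rmat, Fin.sum_univ_four, z20, z30, E10, ← ha_def, ← hd_def] at this
    linarith [this]
  have H22 : p' * (e * e) + p' * (g * g) = p := by
    have := congrFun (congrFun heq 2) 2
    simp [applyAA, rmat, Fin.sum_univ_four, z02, z12, ← he_def, ← hg_def] at this
    linarith [this]
  have H33 : p' * (f * f) + p' * (h * h) = p := by
    have := congrFun (congrFun heq 3) 3
    simp [applyAA, rmat, Fin.sum_univ_four, z03, z13, ← hf_def, ← hh_def] at this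
    linarith [this]
  -- algebra
  have hda : d = a := by
    have h1 : d = a * a * d := by
      calc d = g * g + h * h := E2
        _ = (a * f) * (a * f) + (a * e) * (a * e) := by
            linear_combination (a * f - g) * E3 - (h + a * e) * E4
        _ = a * a * (e * e + f * f) := by ring
        _ = a * a * d := by rw [← E1]
    calc d = a * a * d := h1
      _ = a * (a * d) := by ring
      _ = a := by rw [H01]; ring
  have ha2 : a * a = 1 := by linear_combination H01 - a * hda
  have hnn : 0 ≤ a := by
    rw [← hda, E1]; nlinarith [mul_self_nonneg e, mul_self_nonneg f]
  have ha1 : a = 1 := by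
    have hz : (a - 1) * (a + 1) = 0 := by linear_combination ha2
    rcases mul_eq_zero.mp hz with h' | h'
    · linarith
    · linarith
  have hd1 : d = 1 := by rw [hda, ha1]
  have s1 : e * e + f * f = 1 := by rw [← E1]; exact hd1
  have s2 : g * g + h * h = 1 := by rw [← E2]; exact hd1
  have : p = p' := by
    linear_combination -(1/2) * H22 - (1/2) * H33 + (p'/2) * s1 + (p'/2) * s2
  exact hne this
end
end

section
/- Fix β, ω ∈ ℝ and m₁, m₂, m₃, m₄ ∈ ℝ, and let R be the R-operator of the r-matrix r(m₁,m₂,m₃,m₄) with respect to Ω_β. Then R satisfies the (modified) graded classical Yang–Baxter equation with parameter ω if and only if either (family R_I) m₁ = 0, m₄ = −m₃ and m₂² + m₃² = ω, or (family R_II) m₂ = 0, m₄ = m₃ and m₃² = ω, with m₁ arbitrary. In particular, there are no solutions when ω < 0. -/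
noncomputable section

/-- The R-operator of the r-matrix `r(m₁,m₂,m₃,m₄)` with respect to `Ω_β`:
`R(T₁) = m₁T₁ − βm₁T₂`, `R(T₂) = −m₁T₂`, `R(T₃) = m₂T₃ + m₄T₄`, `R(T₄) = −m₃T₃ − m₂T₄`. -/
def Rop (β m₁ m₂ m₃ m₄ : ℝ) : V4 →ₗ[ℝ] V4 :=
  Matrix.toLin' !![m₁, 0, 0, 0; -(β*m₁), -m₁, 0, 0; 0, 0, m₂, -m₃; 0, 0, m₄, -m₂]

/-- `R` satisfies the (modified) graded classical Yang–Baxter equation with parameter `ω`: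
`[R(x),R(y)] − R([R(x),y] + [x,R(y)]) = ω[x,y]` for all `x, y ∈ V`. -/
def SatGCYBE (R : V4 →ₗ[ℝ] V4) (ω : ℝ) : Prop :=
  ∀ x y : V4, brC5 (R x) (R y) - R (brC5 (R x) y + brC5 x (R y)) = ω • brC5 x y

lemma Rop_apply (β m₁ m₂ m₃ m₄ : ℝ) (x : V4) :
    Rop β m₁ m₂ m₃ m₄ x =
      ![m₁ * x 0, -(β*m₁) * x 0 + -m₁ * x 1, m₂ * x 2 + -m₃ * x 3, m₄ * x 2 + -m₂ * x 3] := by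
  funext i
  fin_cases i <;>
    simp [Rop, Matrix.toLin'_apply, Matrix.mulVec, dotProduct, Fin.sum_univ_four,
      Matrix.vecHead, Matrix.vecTail]

lemma sat_of_eqs (β ω m₁ m₂ m₃ m₄ : ℝ)
    (hA : m₂^2 + m₄^2 + 2*m₁*m₂ = ω)
    (hB : m₂^2 + m₃^2 - 2*m₁*m₂ = ω)
    (hC : m₁*m₄ - m₂*m₄ - m₁*m₃ - m₂*m₃ = 0) :
    SatGCYBE (Rop β m₁ m₂ m₃ m₄) ω := by
  intro x y
  funext i
  fin_cases i
  · simp [Rop_apply, brC5]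
  · simp only [Rop_apply, brC5, Pi.add_apply, Pi.sub_apply, Pi.smul_apply, smul_eq_mul,
      Fin.mk_one, Matrix.cons_val_zero, Matrix.cons_val_one, Matrix.head_cons,
      Matrix.cons_val_two, Matrix.tail_cons, Matrix.cons_val_three]
    linear_combination (x 2 * y 2) * hA + (x 2 * y 3 + x 3 * y 2) * hC + (x 3 * y 3) * hB
  · simp [Rop_apply, brC5]
    linear_combination (x 0 * y 2 - x 2 * y 0) * hC + (x 0 * y 3 - x 3 * y 0) * hB
  · simp [Rop_apply, brC5]
    linear_combination (x 2 * y 0 - x 0 * y 2) * hA + (x 3 * y 0 - x 0 * y 3) * hC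

/-- The R-operator of `r(m₁,m₂,m₃,m₄)` with respect to `Ω_β` satisfies the (modified) graded
classical Yang–Baxter equation with parameter `ω` if and only if either (family `R_I`)
`m₁ = 0`, `m₄ = -m₃` and `m₂² + m₃² = ω`, or (family `R_II`) `m₂ = 0`, `m₄ = m₃` and
`m₃² = ω` (with `m₁` arbitrary). In particular, there are no solutions when `ω < 0`. -/
theorem gcybe_solutions_two_families (β ω m₁ m₂ m₃ m₄ : ℝ) :
    (SatGCYBE (Rop β m₁ m₂ m₃ m₄) ω ↔
      (m₁ = 0 ∧ m₄ = -m₃ ∧ m₂ ^ 2 + m₃ ^ 2 = ω) ∨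
      (m₂ = 0 ∧ m₄ = m₃ ∧ m₃ ^ 2 = ω)) ∧
    (ω < 0 → ¬ SatGCYBE (Rop β m₁ m₂ m₃ m₄) ω) := by
  have hiff : SatGCYBE (Rop β m₁ m₂ m₃ m₄) ω ↔
      (m₁ = 0 ∧ m₄ = -m₃ ∧ m₂ ^ 2 + m₃ ^ 2 = ω) ∨
      (m₂ = 0 ∧ m₄ = m₃ ∧ m₃ ^ 2 = ω) := by
    constructor
    · intro h
      have hA' := congrFun (h ![0,0,1,0] ![0,0,1,0]) 1
      have hB' := congrFun (h ![0,0,0,1] ![0,0,0,1]) 1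
      have hC' := congrFun (h ![0,0,1,0] ![0,0,0,1]) 1
      simp [Rop_apply, brC5] at hA' hB' hC'
      have hA : m₂^2 + m₄^2 + 2*m₁*m₂ = ω := by linear_combination hA'
      have hB : m₂^2 + m₃^2 - 2*m₁*m₂ = ω := by linear_combination hB'
      have hC : m₁*m₄ - m₂*m₄ - m₁*m₃ - m₂*m₃ = 0 := by linear_combination hC'
      by_cases hm2 : m₂ = 0
      · by_cases hm1 : m₁ = 0
        · have h34 : (m₄ - m₃) * (m₄ + m₃) = 0 := by
            linear_combination hA - hB - 4*m₂*hm1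
          rcases mul_eq_zero.mp h34 with h' | h'
          · exact Or.inr ⟨hm2, by linarith, by linear_combination hB - m₂*hm2 + 2*m₂*hm1⟩
          · exact Or.inl ⟨hm1, by linarith, by linear_combination hB + 2*m₂*hm1⟩
        · have h43 : m₄ = m₃ := by
            have h5 : m₁ * m₄ = m₁ * m₃ := by linear_combination hC + (m₄ + m₃) * hm2
            exact mul_left_cancel₀ hm1 h5
          exact Or.inr ⟨hm2, h43, by linear_combination hB - (m₂ - 2*m₁)*hm2⟩
      · -- m₂ ≠ 0 : show m₁ = 0
        have hkey : m₁ * ((m₄ - m₃)^2 + 4*m₂^2) = 0 := by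
          linear_combination (m₄ - m₃) * hC + m₂ * hA - m₂ * hB
        have hpos : (m₄ - m₃)^2 + 4*m₂^2 > 0 := by positivity
        have hm1 : m₁ = 0 := by
          rcases mul_eq_zero.mp hkey with h' | h'
          · exact h'
          · exact absurd h' (ne_of_gt hpos)
        have h4 : m₄ = -m₃ := by
          have h5 : m₂ * (m₄ + m₃) = 0 := by
            linear_combination -hC + (m₄ - m₃) * hm1
          have := (mul_eq_zero.mp h5).resolve_left hm2
          linarith
        exact Or.inl ⟨hm1, h4, by linear_combination hB + 2*m₂*hm1⟩
    · rintro (⟨h1, h4, hw⟩ | ⟨h2, h4, hw⟩)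
      · exact sat_of_eqs β ω m₁ m₂ m₃ m₄
          (by linear_combination (m₄ - m₃) * h4 + 2*m₂*h1 + hw)
          (by linear_combination -2*m₂*h1 + hw)
          (by linear_combination (m₄ - m₃) * h1 - m₂ * h4)
      · exact sat_of_eqs β ω m₁ m₂ m₃ m₄
          (by linear_combination (m₂ + 2*m₁) * h2 + (m₄ + m₃) * h4 + hw)
          (by linear_combination (m₂ - 2*m₁) * h2 + hw)
          (by linear_combination m₁ * h4 - (m₄ + m₃) * h2)
  refine ⟨hiff, fun hw h => ?_⟩
  rcases hiff.mp h with ⟨_, _, hω⟩ | ⟨_, _, hω⟩ <;> nlinarith [sq_nonneg m₂, sq_nonneg m₃]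
end
end

section
/- A linear map A: V → V is an automorphism of the Lie superalgebra (C⁵₀+A) if and only if there exist a, b, c ∈ ℝ with a² + b² ≠ 0 such that either A(T₁) = T₁ + cT₂, A(T₂) = (a²+b²)T₂, A(T₃) = −aT₃ + bT₄, A(T₄) = −bT₃ − aT₄, or A(T₁) = −T₁ + cT₂, A(T₂) = (a²+b²)T₂, A(T₃) = aT₃ − bT₄, A(T₄) = −bT₃ − aT₄. -/
noncomputable section

lemma T_apply (i j : Fin 4) : T i j = if j = i then 1 else 0 := Pi.single_apply i 1 j

lemma decomp (x : V4) : x = x 0 • T 0 + x 1 • T 1 + x 2 • T 2 + x 3 • T 3 := by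
  funext j; fin_cases j <;> simp [T, Pi.single_apply]

lemma mem_spanEven_iff (v : V4) : v ∈ spanEven ↔ v 2 = 0 ∧ v 3 = 0 := by
  constructor
  · intro h
    induction h using Submodule.span_induction with
    | mem x hx => rcases hx with h | h <;> subst h <;> simp [T, Pi.single_apply]
    | zero => simp
    | add x y _ _ hx hy => simp [hx.1, hx.2, hy.1, hy.2]
    | smul a x _ hx => simp [hx.1, hx.2]
  · rintro ⟨h2, h3⟩
    have hv : v = v 0 • T 0 + v 1 • T 1 := by
      conv_lhs => rw [decomp v]
      rw [h2, h3]; simp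
    rw [hv]
    exact add_mem (Submodule.smul_mem _ _ (Submodule.subset_span (Set.mem_insert _ _)))
      (Submodule.smul_mem _ _ (Submodule.subset_span (Set.mem_insert_of_mem _ rfl)))

lemma mem_spanOdd_iff (v : V4) : v ∈ spanOdd ↔ v 0 = 0 ∧ v 1 = 0 := by
  constructor
  · intro h
    induction h using Submodule.span_induction with
    | mem x hx => rcases hx with h | h <;> subst h <;> simp [T, Pi.single_apply]
    | zero => simp
    | add x y _ _ hx hy => simp [hx.1, hx.2, hy.1, hy.2]
    | smul a x _ hx => simp [hx.1, hx.2]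
  · rintro ⟨h0, h1⟩
    have hv : v = v 2 • T 2 + v 3 • T 3 := by
      conv_lhs => rw [decomp v]
      rw [h0, h1]; simp
    rw [hv]
    exact add_mem (Submodule.smul_mem _ _ (Submodule.subset_span (Set.mem_insert _ _)))
      (Submodule.smul_mem _ _ (Submodule.subset_span (Set.mem_insert_of_mem _ rfl)))

lemma br22 : brC5 (T 2) (T 2) = T 1 := by
  funext j; fin_cases j <;> simp [brC5, T, Pi.single_apply]
lemma br02 : brC5 (T 0) (T 2) = -(T 3) := by
  funext j; fin_cases j <;> simp [brC5, T, Pi.single_apply]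
lemma br03 : brC5 (T 0) (T 3) = T 2 := by
  funext j; fin_cases j <;> simp [brC5, T, Pi.single_apply]

lemma isAuto_of (A : V4 →ₗ[ℝ] V4) (e c u v : ℝ)
    (he : e ^ 2 = 1) (hk : u ^ 2 + v ^ 2 ≠ 0)
    (hT0 : A (T 0) = e • T 0 + c • T 1)
    (hT1 : A (T 1) = (u ^ 2 + v ^ 2) • T 1)
    (hT2 : A (T 2) = u • T 2 + v • T 3)
    (hT3 : A (T 3) = (-(e * v)) • T 2 + (e * u) • T 3) : IsAuto A := by
  have hrep : ∀ x : V4, A x = x 0 • A (T 0) + x 1 • A (T 1) + x 2 • A (T 2) + x 3 • A (T 3) := by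
    intro x
    conv_lhs => rw [decomp x]
    simp only [map_add, map_smul]
  have hval : ∀ x : V4, A x =
      ![e * x 0, c * x 0 + (u ^ 2 + v ^ 2) * x 1,
        u * x 2 - e * v * x 3, v * x 2 + e * u * x 3] := by
    intro x
    rw [hrep x, hT0, hT1, hT2, hT3]
    funext j; fin_cases j <;> simp [T_apply] <;> ring
  have he0 : e ≠ 0 := by intro h; rw [h] at he; norm_num at he
  have hinj : Function.Injective A := by
    intro x y hxy
    have hs : A (x - y) = 0 := by rw [map_sub, hxy, sub_self]
    rw [hval] at hs
    have h0 := congrFun hs 0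
    have h1 := congrFun hs 1
    have h2 := congrFun hs 2
    have h3 := congrFun hs 3
    simp only [Matrix.cons_val_zero, Matrix.cons_val_one, Matrix.head_cons, Pi.zero_apply,
      Matrix.cons_val_two, Matrix.cons_val_three, Matrix.tail_cons] at h0 h1 h2 h3
    have hd0 : (x - y) 0 = 0 := by
      rcases mul_eq_zero.mp h0 with h | h
      · exact absurd h he0
      · exact h
    have hd2 : (x - y) 2 = 0 := by
      have hq : (u ^ 2 + v ^ 2) * (x - y) 2 = 0 := by
        linear_combination u * h2 + v * h3
      rcases mul_eq_zero.mp hq with h | h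
      · exact absurd h hk
      · exact h
    have hd3 : (x - y) 3 = 0 := by
      have hq : (u ^ 2 + v ^ 2) * (x - y) 3 = 0 := by
        linear_combination (-(e * v)) * h2 + (e * u) * h3 - ((u ^ 2 + v ^ 2) * ((x - y) 3)) * he
      rcases mul_eq_zero.mp hq with h | h
      · exact absurd h hk
      · exact h
    have hd1 : (x - y) 1 = 0 := by
      have hq : (u ^ 2 + v ^ 2) * (x - y) 1 = 0 := by
        linear_combination h1 - c * hd0
      rcases mul_eq_zero.mp hq with h | h
      · exact absurd h hk
      · exact h
    have : x - y = 0 := by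
      funext j; fin_cases j
      · exact hd0
      · exact hd1
      · exact hd2
      · exact hd3
    exact sub_eq_zero.mp this
  refine ⟨⟨hinj, LinearMap.injective_iff_surjective.mp hinj⟩, ?_, ?_, ?_⟩
  · intro x hx
    obtain ⟨hx2, hx3⟩ := (mem_spanEven_iff x).mp hx
    refine (mem_spanEven_iff _).mpr ⟨?_, ?_⟩ <;> rw [hval] <;> simp [hx2, hx3]
  · intro x hx
    obtain ⟨hx0, hx1⟩ := (mem_spanOdd_iff x).mp hx
    refine (mem_spanOdd_iff _).mpr ⟨?_, ?_⟩ <;> rw [hval] <;> simp [hx0, hx1]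
  · intro x y
    rw [hval (brC5 x y), hval x, hval y]
    funext j
    fin_cases j
    · simp [brC5]
    · simp [brC5]
      linear_combination (-((u ^ 2 + v ^ 2) * (x 3 * y 3))) * he
    · simp [brC5]
      linear_combination (-(u * (x 0 * y 3 - x 3 * y 0))) * he
    · simp [brC5]
      linear_combination (-(v * (x 0 * y 3 - x 3 * y 0))) * he

/-- **The automorphism supergroup of `(C⁵₀+A)`.** A linear map `A : V → V` is an automorphism
of `(C⁵₀+A)` if and only if there exist `a, b, c ∈ ℝ` with `a² + b² ≠ 0` such that either
`A(T₁) = T₁ + cT₂`, `A(T₂) = (a²+b²)T₂`, `A(T₃) = −aT₃ + bT₄`, `A(T₄) = −bT₃ − aT₄`, or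
`A(T₁) = −T₁ + cT₂`, `A(T₂) = (a²+b²)T₂`, `A(T₃) = aT₃ − bT₄`, `A(T₄) = −bT₃ − aT₄`. -/
theorem automorphism_characterization (A : V4 →ₗ[ℝ] V4) :
    IsAuto A ↔
      ∃ a b c : ℝ, a ^ 2 + b ^ 2 ≠ 0 ∧
        ((A (T 0) = T 0 + c • T 1 ∧
          A (T 1) = (a ^ 2 + b ^ 2) • T 1 ∧
          A (T 2) = (-a) • T 2 + b • T 3 ∧
          A (T 3) = (-b) • T 2 + (-a) • T 3) ∨
         (A (T 0) = -T 0 + c • T 1 ∧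
          A (T 1) = (a ^ 2 + b ^ 2) • T 1 ∧
          A (T 2) = a • T 2 + (-b) • T 3 ∧
          A (T 3) = (-b) • T 2 + (-a) • T 3)) := by
  constructor
  · intro h
    obtain ⟨hbij, hE, hO, hbr⟩ := h
    have hT0E := (mem_spanEven_iff _).mp (hE _ (Submodule.subset_span (Set.mem_insert _ _)))
    have hT1E := (mem_spanEven_iff _).mp (hE _ (Submodule.subset_span (Set.mem_insert_of_mem _ rfl)))
    have hT2O := (mem_spanOdd_iff _).mp (hO _ (Submodule.subset_span (Set.mem_insert _ _)))
    have hT3O := (mem_spanOdd_iff _).mp (hO _ (Submodule.subset_span (Set.mem_insert_of_mem _ rfl)))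
    obtain ⟨h02, h03⟩ := hT0E
    obtain ⟨h12, h13⟩ := hT1E
    obtain ⟨h20, h21⟩ := hT2O
    obtain ⟨h30, h31⟩ := hT3O
    -- from [T2,T2] = T1
    have e1 := hbr (T 2) (T 2); rw [br22] at e1
    have eb0 : A (T 1) 0 = 0 := by
      have := congrFun e1 0; simpa [brC5] using this
    have eb1 : A (T 1) 1 = A (T 2) 2 ^ 2 + A (T 2) 3 ^ 2 := by
      have := congrFun e1 1; simp [brC5, h20, h21] at this; rw [this]; ring
    -- from [T0,T2] = -T3
    have e2 := hbr (T 0) (T 2); rw [br02, map_neg] at e2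
    have ew : A (T 3) 2 = -(A (T 0) 0 * A (T 2) 3) := by
      have := congrFun e2 2; simp [brC5, h20, h03] at this; linarith
    have ez : A (T 3) 3 = A (T 0) 0 * A (T 2) 2 := by
      have := congrFun e2 3; simp [brC5, h20, h03] at this; linarith
    -- from [T0,T3] = T2
    have e3 := hbr (T 0) (T 3); rw [br03] at e3
    have eu : A (T 2) 2 = A (T 0) 0 * A (T 3) 3 := by
      have := congrFun e3 2; simp [brC5, h30, h03] at this; linarith
    have ev : A (T 2) 3 = -(A (T 0) 0 * A (T 3) 2) := by
      have := congrFun e3 3; simp [brC5, h30, h03] at this; linarith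
    -- A T2 ≠ 0
    have hne : ¬ (A (T 2) 2 = 0 ∧ A (T 2) 3 = 0) := by
      rintro ⟨hu, hv⟩
      have h0 : A (T 2) = A 0 := by
        rw [map_zero]; funext j; fin_cases j
        · exact h20
        · exact h21
        · exact hu
        · exact hv
      have h2 := hbij.1 h0
      have := congrFun h2 2
      simp [T, Pi.single_apply] at this
    have hk : A (T 2) 2 ^ 2 + A (T 2) 3 ^ 2 ≠ 0 := by
      intro h
      exact hne ⟨by nlinarith [sq_nonneg (A (T 2) 2), sq_nonneg (A (T 2) 3)],
        by nlinarith [sq_nonneg (A (T 2) 2), sq_nonneg (A (T 2) 3)]⟩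
    have ha0sq : A (T 0) 0 ^ 2 = 1 := by
      rcases (not_and_or.mp hne) with hu | hv
      · have h5 : A (T 2) 2 * (A (T 0) 0 ^ 2 - 1) = 0 := by
          linear_combination (-(A (T 0) 0)) * ez - eu
        rcases mul_eq_zero.mp h5 with h | h
        · exact absurd h hu
        · linarith
      · have h5 : A (T 2) 3 * (A (T 0) 0 ^ 2 - 1) = 0 := by
          linear_combination (-1 : ℝ) * ev + A (T 0) 0 * ew
        rcases mul_eq_zero.mp h5 with h | h
        · exact absurd h hv
        · linarith
    have ha0 : A (T 0) 0 = 1 ∨ A (T 0) 0 = -1 := by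
      rcases mul_eq_zero.mp (show (A (T 0) 0 - 1) * (A (T 0) 0 + 1) = 0 by linear_combination ha0sq) with h | h
      · left; linarith
      · right; linarith
    rcases ha0 with h1 | h1
    · refine ⟨-(A (T 2) 2), A (T 2) 3, A (T 0) 1,
        by intro h; apply hk; linear_combination h, Or.inl ⟨?_, ?_, ?_, ?_⟩⟩
      · funext j; fin_cases j <;> simp [T_apply]
        · exact h1
        · exact h02
        · exact h03
      · funext j; fin_cases j <;> simp [T_apply]
        · exact eb0
        · rw [eb1]
        · exact h12
        · exact h13
      · funext j; fin_cases j <;> simp [T_apply]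
        · exact h20
        · exact h21
      · funext j; fin_cases j <;> simp [T_apply]
        · exact h30
        · exact h31
        · rw [ew, h1]; ring
        · rw [ez, h1]; ring
    · refine ⟨A (T 2) 2, -(A (T 2) 3), A (T 0) 1,
        by intro h; apply hk; linear_combination h, Or.inr ⟨?_, ?_, ?_, ?_⟩⟩
      · funext j; fin_cases j <;> simp [T_apply]
        · exact h1
        · exact h02
        · exact h03
      · funext j; fin_cases j <;> simp [T_apply]
        · exact eb0
        · rw [eb1]
        · exact h12
        · exact h13
      · funext j; fin_cases j <;> simp [T_apply]
        · exact h20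
        · exact h21
      · funext j; fin_cases j <;> simp [T_apply]
        · exact h30
        · exact h31
        · rw [ew, h1]; ring
        · rw [ez, h1]; ring
  · rintro ⟨a, b, c, hab, ⟨ht0, ht1, ht2, ht3⟩ | ⟨ht0, ht1, ht2, ht3⟩⟩
    · refine isAuto_of A 1 c (-a) b (by norm_num) (by simpa using hab) ?_ ?_ ?_ ?_
      · rw [one_smul]; exact ht0
      · rw [neg_sq]; exact ht1
      · exact ht2
      · rw [show (-(1 * b) : ℝ) = -b by ring, show ((1 : ℝ) * -a) = -a by ring]; exact ht3
    · refine isAuto_of A (-1) c a (-b) (by norm_num) (by simpa using hab) ?_ ?_ ?_ ?_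
      · rw [neg_one_smul]; exact ht0
      · rw [neg_sq]; exact ht1
      · exact ht2
      · rw [show (-(-1 * -b) : ℝ) = -b by ring, show ((-1 : ℝ) * a) = -a by ring]; exact ht3
end
end
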